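/- Let t>0 and let φ be a continuously differentiable function on the closed half plane such that φ is bounded, φ and ∂₂φ are integrable on ℝ²₊, and the boundary trace φ(·,0) is integrable on ℝ. Then for every x ∈ ℝ²₊, ∫_{ℝ²₊} (Γ(x−y,t) + Γ(x−y*,t)) ∂_{y₂}φ(y) dy = ∂_{x₂} [ ∫_{ℝ²₊} (Γ(x−y,t) − Γ(x−y*,t)) φ(y) dy ] − 2Γ₀(x₂,t) ∫_ℝ Γ₀(x₁−y₁,t) φ(y₁,0) dy₁; in other words, e^{tΔ_N}∂₂φ = ∂₂ e^{tΔ_D}φ − 2Γ₀(x₂,t) e^{t∂₁²}φ(·,0). -/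

import Mathlib

/-!
Both kernels factor through the one-dimensional heat kernel: `Γ(x - y) ∓ Γ(x - y*)` equals
`Γ₀(x₁ - y₁)` times the half-line kernel `D(x₂, y₂) = Γ₀(x₂ - y₂) - Γ₀(x₂ + y₂)`, resp.
`N(x₂, y₂) = Γ₀(x₂ - y₂) + Γ₀(x₂ + y₂)`, and the reflection gives `∂ₛ D(s, y) = -∂_y N(s, y)`.
So after differentiating under the integral sign, Fubini and an integration by parts in `y₂` over
`(0, ∞)` turn `∫ ∂ₛD φ` into `∫ N ∂₂φ` plus the boundary term `N(s, 0) φ(y₁, 0) = 2 Γ₀(s) φ(y₁, 0)`;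
there is no term at infinity since `φ(y₁, ·)` and its derivative are integrable, so `φ(y₁, y₂) → 0`.
-/

open MeasureTheory Real
open scoped ENNReal

noncomputable section

/-- The open upper half plane ℝ²₊ = {x : x₂ > 0}. -/
def upperHalf : Set (ℝ × ℝ) := {x | 0 < x.2}

/-- 2D heat kernel Γ(x,t) = (4πt)⁻¹ exp(−|x|²/(4t)). -/
def heatK (x : ℝ × ℝ) (t : ℝ) : ℝ :=
  (4 * π * t)⁻¹ * Real.exp (-(x.1 ^ 2 + x.2 ^ 2) / (4 * t))

/-- 1D heat kernel Γ₀(r,t) = (4πt)^{-1/2} exp(−r²/(4t)). -/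
def heatK1 (r t : ℝ) : ℝ :=
  (Real.sqrt (4 * π * t))⁻¹ * Real.exp (-r ^ 2 / (4 * t))

/-- ∂²_{z₁} E(z) = (z₁² − z₂²)/(2π|z|⁴), for E(z) = −(2π)⁻¹ log|z|. -/
def d2E (z : ℝ × ℝ) : ℝ :=
  (z.1 ^ 2 - z.2 ^ 2) / (2 * π * (z.1 ^ 2 + z.2 ^ 2) ^ 2)

/-- Poisson kernel P_s(r) = s/(π(r²+s²)). -/
def Pker (s r : ℝ) : ℝ := s / (π * (r ^ 2 + s ^ 2))

/-- Conjugate Poisson kernel Q_s(r) = r/(π(r²+s²)). -/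
def Qker (s r : ℝ) : ℝ := r / (π * (r ^ 2 + s ^ 2))

/-- ∇⊥E(z) = (∂₂E(z), −∂₁E(z)) for E(z) = −(2π)⁻¹ log|z|. -/
def gradPerpE (z : ℝ × ℝ) : ℝ × ℝ :=
  (-z.2 / (2 * π * (z.1 ^ 2 + z.2 ^ 2)), z.1 / (2 * π * (z.1 ^ 2 + z.2 ^ 2)))

/-- The Biot–Savart kernel ∇⊥_x D(x,y) = ∇⊥E(x−y) − ∇⊥E(x−y*). -/
def bsKernel (x y : ℝ × ℝ) : ℝ × ℝ :=
  gradPerpE (x.1 - y.1, x.2 - y.2) - gradPerpE (x.1 - y.1, x.2 + y.2)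

/-- Integral of a real function against a finite signed measure (via Jordan decomposition). -/
def sInt (μ : SignedMeasure (ℝ × ℝ)) (f : ℝ × ℝ → ℝ) : ℝ :=
  (∫ y, f y ∂μ.toJordanDecomposition.posPart) - ∫ y, f y ∂μ.toJordanDecomposition.negPart

/-- Integral of a vector-valued function against a finite signed measure. -/
def sIntV (μ : SignedMeasure (ℝ × ℝ)) (f : ℝ × ℝ → ℝ × ℝ) : ℝ × ℝ :=
  (∫ y, f y ∂μ.toJordanDecomposition.posPart) - ∫ y, f y ∂μ.toJordanDecomposition.negPart

/-- Total variation norm ‖μ‖_M of a finite signed measure. -/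
def normM (μ : SignedMeasure (ℝ × ℝ)) : ℝ := (μ.totalVariation Set.univ).toReal

/-- The vorticity kernel W(x,y,t). -/
def Wk (x y : ℝ × ℝ) (t : ℝ) : ℝ :=
  heatK (x.1 - y.1, x.2 - y.2) t + heatK (x.1 - y.1, x.2 + y.2) t
    + 4 * ∫ z₂ in (0:ℝ)..y.2, ∫ z₁ : ℝ, heatK (x.1 - z₁, x.2 + z₂) t * d2E (z₁ - y.1, z₂ - y.2)
    - 2 * heatK1 x.2 t * ∫ z₁ : ℝ, heatK1 (x.1 - z₁) t * Pker y.2 (z₁ - y.1)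

/-- T(t)ω₀(x) = ∫ W(x,y,t) dω₀(y) for a finite signed measure ω₀. -/
def Tsg (ω₀ : SignedMeasure (ℝ × ℝ)) (t : ℝ) (x : ℝ × ℝ) : ℝ :=
  sInt ω₀ (fun y => Wk x y t)

/-- The boundary trace operator T₁μ(x₁) = π⁻¹ ∫ y₂/((x₁−y₁)²+y₂²) dμ(y). -/
def T1op (μ : SignedMeasure (ℝ × ℝ)) (x₁ : ℝ) : ℝ :=
  π⁻¹ * sInt μ (fun y => y.2 / ((x₁ - y.1) ^ 2 + y.2 ^ 2))


open Filter Topology Set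

section HeatKernel

variable {t : ℝ}

lemma heatK_eq_mul (ht : 0 ≤ t) (a b : ℝ) : heatK (a, b) t = heatK1 a t * heatK1 b t := by
  simp only [heatK, heatK1]
  rw [mul_mul_mul_comm, ← mul_inv, mul_self_sqrt (by positivity), ← exp_add]
  congr 2
  ring

lemma heatK1_nonneg (r t : ℝ) : 0 ≤ heatK1 r t := by
  unfold heatK1
  positivity

lemma heatK1_le (ht : 0 ≤ t) (r : ℝ) : heatK1 r t ≤ (√(4 * π * t))⁻¹ := by
  unfold heatK1
  refine mul_le_of_le_one_right (by positivity) (exp_le_one_iff.2 ?_)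
  rw [neg_div]
  exact neg_nonpos.2 (by positivity)

@[fun_prop]
lemma continuous_heatK1 (t : ℝ) : Continuous fun r => heatK1 r t := by
  unfold heatK1
  fun_prop

def heatK1Deriv (r t : ℝ) : ℝ := -(r / (2 * t)) * heatK1 r t

lemma hasDerivAt_heatK1 (r t : ℝ) : HasDerivAt (fun r => heatK1 r t) (heatK1Deriv r t) r := by
  have h : HasDerivAt (fun r : ℝ => -r ^ 2 / (4 * t)) (-(2 * r) / (4 * t)) r := by
    simpa [neg_div] using (hasDerivAt_pow 2 r).neg.div_const (4 * t)
  refine (h.exp.const_mul (√(4 * π * t))⁻¹).congr_deriv ?_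
  unfold heatK1Deriv heatK1
  ring

@[fun_prop]
lemma continuous_heatK1Deriv (t : ℝ) : Continuous fun r => heatK1Deriv r t := by
  unfold heatK1Deriv
  fun_prop

lemma abs_mul_exp_neg_sq_div_le (ht : 0 < t) (r : ℝ) :
    |r| * exp (-r ^ 2 / (4 * t)) ≤ 1 + t := by
  set u := r ^ 2 / (4 * t)
  -- `|r| ≤ t + u ≤ (1 + t) * (1 + u) ≤ (1 + t) * exp u`, the first step by AM-GM
  have hamgm : |r| ≤ t + u := by
    have h : t + u - |r| = (|r| - 2 * t) ^ 2 / (4 * t) := by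
      simp only [u]
      field_simp
      rw [← sq_abs r]
      ring
    linarith [show 0 ≤ (|r| - 2 * t) ^ 2 / (4 * t) by positivity]
  have hu : 0 ≤ u := by positivity
  have hexp : u + 1 ≤ exp u := add_one_le_exp u
  calc |r| * exp (-r ^ 2 / (4 * t)) ≤ (1 + t) * exp u * exp (-u) := by
        rw [neg_div]
        gcongr
        nlinarith
    _ = 1 + t := by rw [mul_assoc, ← exp_add, add_neg_cancel, exp_zero, mul_one]

lemma abs_heatK1Deriv_le (ht : 0 < t) (r : ℝ) :
    |heatK1Deriv r t| ≤ (1 + t) / (2 * t) * (√(4 * π * t))⁻¹ := by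
  unfold heatK1Deriv heatK1
  rw [abs_mul, abs_neg, abs_div, abs_of_pos (by positivity : (0:ℝ) < 2 * t),
    abs_of_nonneg (by positivity : 0 ≤ (√(4 * π * t))⁻¹ * exp (-r ^ 2 / (4 * t)))]
  calc |r| / (2 * t) * ((√(4 * π * t))⁻¹ * exp (-r ^ 2 / (4 * t)))
      = |r| * exp (-r ^ 2 / (4 * t)) / (2 * t) * (√(4 * π * t))⁻¹ := by ring
    _ ≤ (1 + t) / (2 * t) * (√(4 * π * t))⁻¹ := by
      gcongr
      exact abs_mul_exp_neg_sq_div_le ht r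

end HeatKernel

section HalfLine

def dirichletHeatK1 (s y t : ℝ) : ℝ := heatK1 (s - y) t - heatK1 (s + y) t

def neumannHeatK1 (s y t : ℝ) : ℝ := heatK1 (s - y) t + heatK1 (s + y) t

def dirichletHeatK1Deriv (s y t : ℝ) : ℝ := heatK1Deriv (s - y) t - heatK1Deriv (s + y) t

variable {t : ℝ}

lemma hasDerivAt_dirichletHeatK1 (s y t : ℝ) :
    HasDerivAt (fun s => dirichletHeatK1 s y t) (dirichletHeatK1Deriv s y t) s :=
  ((hasDerivAt_heatK1 _ t).comp_sub_const s y).sub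
    ((hasDerivAt_heatK1 _ t).comp_add_const s y)

lemma hasDerivAt_neumannHeatK1 (s y t : ℝ) :
    HasDerivAt (fun y => neumannHeatK1 s y t) (-dirichletHeatK1Deriv s y t) y := by
  refine (((hasDerivAt_heatK1 _ t).comp_const_sub s y).add
    ((hasDerivAt_heatK1 _ t).comp_const_add s y)).congr_deriv ?_
  simp only [dirichletHeatK1Deriv]
  ring

@[fun_prop]
lemma continuous_dirichletHeatK1 (s t : ℝ) : Continuous fun y => dirichletHeatK1 s y t := by
  unfold dirichletHeatK1
  fun_prop

@[fun_prop]
lemma continuous_neumannHeatK1 (s t : ℝ) : Continuous fun y => neumannHeatK1 s y t := by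
  unfold neumannHeatK1
  fun_prop

@[fun_prop]
lemma continuous_dirichletHeatK1Deriv (s t : ℝ) :
    Continuous fun y => dirichletHeatK1Deriv s y t := by
  unfold dirichletHeatK1Deriv
  fun_prop

lemma abs_dirichletHeatK1_le (ht : 0 ≤ t) (s y : ℝ) :
    |dirichletHeatK1 s y t| ≤ (√(4 * π * t))⁻¹ :=
  abs_sub_le_of_nonneg_of_le (heatK1_nonneg _ _) (heatK1_le ht _)
    (heatK1_nonneg _ _) (heatK1_le ht _)

lemma abs_neumannHeatK1_le (ht : 0 ≤ t) (s y : ℝ) :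
    |neumannHeatK1 s y t| ≤ 2 * (√(4 * π * t))⁻¹ := by
  unfold neumannHeatK1
  rw [abs_of_nonneg (add_nonneg (heatK1_nonneg _ _) (heatK1_nonneg _ _))]
  linarith [heatK1_le ht (s - y), heatK1_le ht (s + y)]

lemma abs_dirichletHeatK1Deriv_le (ht : 0 < t) (s y : ℝ) :
    |dirichletHeatK1Deriv s y t| ≤ 2 * ((1 + t) / (2 * t) * (√(4 * π * t))⁻¹) :=
  (abs_sub _ _).trans (by linarith [abs_heatK1Deriv_le ht (s - y), abs_heatK1Deriv_le ht (s + y)])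

theorem integral_Ioi_dirichletHeatK1Deriv_mul_sub (ht : 0 < t) (s : ℝ) {ψ ψ' : ℝ → ℝ}
    (hψ₀ : ContinuousWithinAt ψ (Ici 0) 0) (hψ : ∀ y ∈ Ioi 0, HasDerivAt ψ (ψ' y) y)
    (hψi : IntegrableOn ψ (Ioi 0)) (hψ'i : IntegrableOn ψ' (Ioi 0)) :
    ∫ y in Ioi 0, (dirichletHeatK1Deriv s y t * ψ y - neumannHeatK1 s y t * ψ' y) =
      2 * heatK1 s t * ψ 0 := by
  set u : ℝ → ℝ := fun y => neumannHeatK1 s y t * ψ y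
  have hu : ∀ y ∈ Ioi 0, HasDerivAt u
      (-dirichletHeatK1Deriv s y t * ψ y + neumannHeatK1 s y t * ψ' y) y :=
    fun y hy => (hasDerivAt_neumannHeatK1 s y t).mul (hψ y hy)
  have hu₀ : ContinuousWithinAt u (Ici 0) 0 :=
    (continuous_neumannHeatK1 s t).continuousWithinAt.mul hψ₀
  have hu'i : IntegrableOn
      (fun y => -dirichletHeatK1Deriv s y t * ψ y + neumannHeatK1 s y t * ψ' y) (Ioi 0) :=
    (hψi.bdd_mul (by fun_prop) (.of_forall fun y => by
        rw [norm_neg]; exact abs_dirichletHeatK1Deriv_le ht s y)).add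
      (hψ'i.bdd_mul (by fun_prop) (.of_forall fun y => abs_neumannHeatK1_le ht.le s y))
  have hu_top : Tendsto u atTop (𝓝 0) :=
    isBoundedUnder_le_mul_tendsto_zero
      (isBoundedUnder_of ⟨_, fun y => abs_neumannHeatK1_le ht.le s y⟩)
      (tendsto_zero_of_hasDerivAt_of_integrableOn_Ioi hψ hψ'i hψi)
  have hFTC := integral_Ioi_of_hasDerivAt_of_tendsto hu₀ hu hu'i hu_top
  calc ∫ y in Ioi 0, (dirichletHeatK1Deriv s y t * ψ y - neumannHeatK1 s y t * ψ' y)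
      = -∫ y in Ioi 0, (-dirichletHeatK1Deriv s y t * ψ y + neumannHeatK1 s y t * ψ' y) := by
        rw [← integral_neg]
        congr 1 with y
        ring
    _ = u 0 := by rw [hFTC, zero_sub, neg_neg]
    _ = 2 * heatK1 s t * ψ 0 := by
        simp only [u, neumannHeatK1, sub_zero, add_zero]
        ring

end HalfLine

theorem hasDerivAt_integral_mul_of_norm_le {α : Type*} [MeasurableSpace α] {μ : Measure α}
    {k k' : ℝ → α → ℝ} {f : α → ℝ} {s₀ C C' : ℝ} (hf : Integrable f μ)
    (hk : ∀ s, AEStronglyMeasurable (k s) μ) (hkC : ∀ y, ‖k s₀ y‖ ≤ C)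
    (hk' : AEStronglyMeasurable (k' s₀) μ) (hk'C : ∀ s y, ‖k' s y‖ ≤ C')
    (hderiv : ∀ s y, HasDerivAt (fun s => k s y) (k' s y) s) :
    HasDerivAt (fun s => ∫ y, k s y * f y ∂μ) (∫ y, k' s₀ y * f y ∂μ) s₀ :=
  (hasDerivAt_integral_of_dominated_loc_of_deriv_le (F := fun s y => k s y * f y)
    (F' := fun s y => k' s y * f y) univ_mem
    (.of_forall fun s => (hk s).mul hf.1) (hf.bdd_mul (hk s₀) (.of_forall hkC)) (hk'.mul hf.1)
    (.of_forall fun y s _ => norm_mul_le_of_le (hk'C s y) le_rfl)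
    (hf.norm.const_mul C') (.of_forall fun y s _ => (hderiv s y).mul_const (f y))).2

section UpperHalf

lemma upperHalf_eq_univ_prod : upperHalf = univ ×ˢ Ioi (0 : ℝ) := by
  ext y
  simp [upperHalf]

lemma ae_integrableOn_Ioi_slice {f : ℝ × ℝ → ℝ} (hf : IntegrableOn f upperHalf) :
    ∀ᵐ y₁, IntegrableOn (fun y₂ => f (y₁, y₂)) (Ioi 0) := by
  rw [upperHalf_eq_univ_prod, Measure.volume_eq_prod, IntegrableOn,
    ← Measure.prod_restrict, Measure.restrict_univ] at hf
  exact hf.prod_right_ae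

lemma setIntegral_upperHalf {f : ℝ × ℝ → ℝ} (hf : IntegrableOn f upperHalf) :
    ∫ y in upperHalf, f y = ∫ y₁, ∫ y₂ in Ioi 0, f (y₁, y₂) := by
  rw [upperHalf_eq_univ_prod, Measure.volume_eq_prod] at *
  rw [setIntegral_prod _ hf, setIntegral_univ]

variable {φ : ℝ × ℝ → ℝ}

lemma hasDerivAt_snd_slice (hφ : ContDiffOn ℝ 1 φ {x | 0 ≤ x.2}) (y₁ : ℝ) {y₂ : ℝ}
    (hy₂ : 0 < y₂) : HasDerivAt (fun s => φ (y₁, s)) (fderiv ℝ φ (y₁, y₂) (0, 1)) y₂ := by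
  have hnhds : {x : ℝ × ℝ | 0 ≤ x.2} ∈ 𝓝 (y₁, y₂) :=
    mem_of_superset ((isOpen_lt continuous_const continuous_snd).mem_nhds hy₂)
      fun x (hx : 0 < x.2) => hx.le
  have hφd : DifferentiableAt ℝ φ (y₁, y₂) :=
    (hφ.differentiableOn one_ne_zero _ hy₂.le).differentiableAt hnhds
  exact hφd.hasFDerivAt.comp_hasDerivAt y₂ ((hasDerivAt_const y₂ y₁).prodMk (hasDerivAt_id y₂))

lemma continuousWithinAt_snd_slice (hφ : ContDiffOn ℝ 1 φ {x | 0 ≤ x.2}) (y₁ : ℝ) :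
    ContinuousWithinAt (fun s => φ (y₁, s)) (Ici 0) 0 :=
  (hφ.continuousOn (y₁, 0) (by simp)).comp (Continuous.prodMk_right y₁).continuousWithinAt
    fun _ hs => hs

theorem setIntegral_upperHalf_mul_dirichletHeatK1Deriv {t : ℝ} (ht : 0 < t)
    (hφ : ContDiffOn ℝ 1 φ {x | 0 ≤ x.2}) (hint : IntegrableOn φ upperHalf)
    (hint₂ : IntegrableOn (fun y => fderiv ℝ φ y (0, 1)) upperHalf)
    {w : ℝ → ℝ} {C : ℝ} (hw : Continuous w) (hwC : ∀ r, ‖w r‖ ≤ C) (s : ℝ) :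
    ∫ y in upperHalf, w y.1 * dirichletHeatK1Deriv s y.2 t * φ y =
      (∫ y in upperHalf, w y.1 * neumannHeatK1 s y.2 t * fderiv ℝ φ y (0, 1))
        + 2 * heatK1 s t * ∫ y₁, w y₁ * φ (y₁, 0) := by
  have hD : IntegrableOn (fun y => w y.1 * dirichletHeatK1Deriv s y.2 t * φ y) upperHalf :=
    hint.bdd_mul (by fun_prop)
      (.of_forall fun y => norm_mul_le_of_le (hwC _) (abs_dirichletHeatK1Deriv_le ht s y.2))
  have hN : IntegrableOn (fun y => w y.1 * neumannHeatK1 s y.2 t * fderiv ℝ φ y (0, 1))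
      upperHalf :=
    hint₂.bdd_mul (by fun_prop)
      (.of_forall fun y => norm_mul_le_of_le (hwC _) (abs_neumannHeatK1_le ht.le s y.2))
  have hslice : ∀ᵐ y₁, ∫ y₂ in Ioi 0, (w y₁ * dirichletHeatK1Deriv s y₂ t * φ (y₁, y₂)
      - w y₁ * neumannHeatK1 s y₂ t * fderiv ℝ φ (y₁, y₂) (0, 1)) =
        2 * heatK1 s t * (w y₁ * φ (y₁, 0)) := by
    filter_upwards [ae_integrableOn_Ioi_slice hint, ae_integrableOn_Ioi_slice hint₂]
      with y₁ hφi hφ'i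
    rw [show 2 * heatK1 s t * (w y₁ * φ (y₁, 0)) = w y₁ * (2 * heatK1 s t * φ (y₁, 0)) by ring,
      ← integral_Ioi_dirichletHeatK1Deriv_mul_sub ht s (continuousWithinAt_snd_slice hφ y₁)
        (fun y₂ hy₂ => hasDerivAt_snd_slice hφ y₁ hy₂) hφi hφ'i, ← integral_const_mul]
    congr 1 with y₂
    ring
  have hDN : IntegrableOn (fun y => w y.1 * dirichletHeatK1Deriv s y.2 t * φ y
      - w y.1 * neumannHeatK1 s y.2 t * fderiv ℝ φ y (0, 1)) upperHalf := hD.sub hN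
  rw [← sub_eq_iff_eq_add', ← integral_sub hD hN, setIntegral_upperHalf hDN,
    integral_congr_ae hslice, integral_const_mul]

end UpperHalf

theorem neumann_dirichlet_commute_general (t : ℝ) (ht : 0 < t) (φ : ℝ × ℝ → ℝ)
    (hφ : ContDiffOn ℝ 1 φ {x : ℝ × ℝ | 0 ≤ x.2})
    (hint : IntegrableOn φ upperHalf)
    (hint2 : IntegrableOn (fun y => fderiv ℝ φ y (0, 1)) upperHalf) :
    ∀ x ∈ upperHalf,
      HasDerivAt
        (fun s => ∫ y in upperHalf,
          (heatK (x.1 - y.1, s - y.2) t - heatK (x.1 - y.1, s + y.2) t) * φ y)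
        ((∫ y in upperHalf,
          (heatK (x.1 - y.1, x.2 - y.2) t + heatK (x.1 - y.1, x.2 + y.2) t)
            * fderiv ℝ φ y (0, 1))
          + 2 * heatK1 x.2 t * ∫ y₁ : ℝ, heatK1 (x.1 - y₁) t * φ (y₁, 0))
        x.2 := by
  intro x _
  simp only [heatK_eq_mul ht.le, ← mul_sub, ← mul_add, ← dirichletHeatK1.eq_1,
    ← neumannHeatK1.eq_1]
  have hw : ∀ r, ‖heatK1 (x.1 - r) t‖ ≤ (√(4 * π * t))⁻¹ := fun r => by
    rw [Real.norm_of_nonneg (heatK1_nonneg _ _)]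
    exact heatK1_le ht.le _
  rw [← setIntegral_upperHalf_mul_dirichletHeatK1Deriv ht hφ hint hint2 (by fun_prop) hw]
  have hk : ∀ s, Continuous fun y : ℝ × ℝ => heatK1 (x.1 - y.1) t * dirichletHeatK1 s y.2 t :=
    fun s => by fun_prop
  have hk' : Continuous fun y : ℝ × ℝ => heatK1 (x.1 - y.1) t * dirichletHeatK1Deriv x.2 y.2 t := by
    fun_prop
  exact hasDerivAt_integral_mul_of_norm_le hint (fun s => (hk s).aestronglyMeasurable)
    (fun y => norm_mul_le_of_le (hw y.1) (abs_dirichletHeatK1_le ht.le x.2 y.2))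
    hk'.aestronglyMeasurable
    (fun s y => norm_mul_le_of_le (hw y.1) (abs_dirichletHeatK1Deriv_le ht s y.2))
    (fun s y => (hasDerivAt_dirichletHeatK1 s y.2 t).const_mul _)

/-- e^{tΔ_N}∂₂φ = ∂₂ e^{tΔ_D}φ − 2Γ₀(x₂,t) e^{t∂₁²}φ(·,0), i.e. for x ∈ ℝ²₊ the
x₂-derivative of the Dirichlet heat extension of φ exists and equals the Neumann heat extension
of ∂₂φ plus the boundary correction 2Γ₀(x₂,t) e^{t∂₁²}φ(·,0). -/
theorem neumann_dirichlet_commute (t : ℝ) (ht : 0 < t) (φ : ℝ × ℝ → ℝ)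
    (hφ : ContDiffOn ℝ 1 φ {x : ℝ × ℝ | 0 ≤ x.2})
    (hbd : ∃ M, ∀ x : ℝ × ℝ, 0 ≤ x.2 → |φ x| ≤ M)
    (hint : IntegrableOn φ upperHalf)
    (hint2 : IntegrableOn (fun y => fderiv ℝ φ y (0, 1)) upperHalf)
    (htrace : Integrable (fun y₁ : ℝ => φ (y₁, 0))) :
    ∀ x ∈ upperHalf,
      HasDerivAt
        (fun s => ∫ y in upperHalf,
          (heatK (x.1 - y.1, s - y.2) t - heatK (x.1 - y.1, s + y.2) t) * φ y)
        ((∫ y in upperHalf,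
          (heatK (x.1 - y.1, x.2 - y.2) t + heatK (x.1 - y.1, x.2 + y.2) t)
            * fderiv ℝ φ y (0, 1))
          + 2 * heatK1 x.2 t * ∫ y₁ : ℝ, heatK1 (x.1 - y₁) t * φ (y₁, 0))
        x.2 :=
  neumann_dirichlet_commute_general t ht φ hφ hint hint2
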